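/- arXiv:2508.16426 — 2 statements merged into one kernel-verified Lean document; each statement's English description precedes it below -/
import Mathlib

section
/- As z → 1⁺, sqrt(z^2 - 1) - arccos(1/z) = (2√2/3)(z-1)^{3/2} + O((z-1)^{5/2}). -/
/-!
The remainder `R(t) = √(t² - 1) - arccos (1/t) - (2√2/3) (t - 1)^{3/2}` vanishes at `t = 1`,
and for `t > 1` its derivative is `√(t - 1) (√(t + 1)/t - √2)`, since `√(t² - 1) - arccos (1/t)`
has derivative `√(t² - 1)/t`. The second factor is `O(t - 1)` uniformly on `[1, ∞)`, so
`|R'(t)| ≤ (3/2) (t - 1)^{3/2}`, and the mean value theorem on `[1, z]` gives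
`|R(z)| ≤ (3/2) (z - 1)^{5/2}` for every `z > 1`.
-/

open Real Set

theorem hasDerivAt_arccos_one_div {t : ℝ} (ht : 1 < t) :
    HasDerivAt (fun t : ℝ => arccos (1 / t)) (1 / (t * √(t ^ 2 - 1))) t := by
  have ht0 : 0 < t := by linarith
  have hinv : HasDerivAt (fun t : ℝ => 1 / t) (-(t ^ 2)⁻¹) t := by
    simpa [one_div] using hasDerivAt_inv ht0.ne'
  have hlt : 1 / t < 1 := (div_lt_one ht0).2 ht
  refine ((hasDerivAt_arccos (by linarith [one_div_pos.2 ht0]) hlt.ne).comp t hinv).congr_deriv ?_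
  rw [show 1 - (1 / t) ^ 2 = (t ^ 2 - 1) / t ^ 2 by field_simp,
    sqrt_div' _ (sq_nonneg t), sqrt_sq ht0.le]
  have : 0 < √(t ^ 2 - 1) := sqrt_pos.2 (by nlinarith)
  field_simp

theorem hasDerivAt_sqrt_sq_sub_one_sub_arccos_one_div {t : ℝ} (ht : 1 < t) :
    HasDerivAt (fun t : ℝ => √(t ^ 2 - 1) - arccos (1 / t)) (√(t ^ 2 - 1) / t) t := by
  have hpos : 0 < t ^ 2 - 1 := by nlinarith
  have hsq : HasDerivAt (fun t : ℝ => √(t ^ 2 - 1)) (t / √(t ^ 2 - 1)) t := by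
    convert ((hasDerivAt_pow 2 t).sub_const 1).sqrt hpos.ne' using 1
    field_simp
    push_cast; ring
  refine (hsq.sub (hasDerivAt_arccos_one_div ht)).congr_deriv ?_
  have h0 : 0 < √(t ^ 2 - 1) := sqrt_pos.2 hpos
  have : t ≠ 0 := by positivity
  field_simp
  rw [sq_sqrt hpos.le]

theorem hasDerivAt_sub_one_rpow_three_halves (t : ℝ) :
    HasDerivAt (fun t : ℝ => (t - 1) ^ ((3 : ℝ) / 2)) (3 / 2 * √(t - 1)) t := by
  refine (((hasDerivAt_id t).sub_const 1).rpow_const (p := 3 / 2)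
    (Or.inr (by norm_num))).congr_deriv ?_
  rw [sqrt_eq_rpow]
  norm_num

theorem abs_sqrt_add_one_div_sub_sqrt_two_le {t : ℝ} (ht : 1 ≤ t) :
    |√(t + 1) / t - √2| ≤ 3 / 2 * (t - 1) := by
  have ht0 : 0 < t := by linarith
  have ha : √(t + 1) ^ 2 = t + 1 := sq_sqrt (by linarith)
  have hb : √2 ^ 2 = 2 := sq_sqrt (by norm_num)
  have ha1 : 1 ≤ √(t + 1) := one_le_sqrt.2 (by linarith)
  have hb1 : 1 ≤ √2 := one_le_sqrt.2 (by norm_num)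
  have hle : √(t + 1) ≤ √2 * t := by
    calc √(t + 1) ≤ √(2 * t ^ 2) := sqrt_le_sqrt (by nlinarith)
      _ = √2 * t := by rw [sqrt_mul zero_le_two, sqrt_sq ht0.le]
  -- `(√2 t - √(t+1)) (√2 t + √(t+1)) = (2t + 1)(t - 1)` and `√2 t + √(t+1) ≥ 2`
  have hdiff : √2 * t - √(t + 1) ≤ (2 * t + 1) * (t - 1) / 2 := by
    rw [le_div_iff₀ two_pos]
    nlinarith [mul_nonneg (sub_nonneg.2 hle) (by nlinarith : (0:ℝ) ≤ √2 * t + √(t + 1) - 2)]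
  rw [abs_of_nonpos (by rw [sub_nonpos, div_le_iff₀ ht0]; linarith), neg_sub,
    show √2 - √(t + 1) / t = (√2 * t - √(t + 1)) / t by field_simp, div_le_iff₀ ht0]
  nlinarith

noncomputable def expansionRemainder (t : ℝ) : ℝ :=
  √(t ^ 2 - 1) - arccos (1 / t) - 2 * √2 / 3 * (t - 1) ^ ((3 : ℝ) / 2)

theorem expansionRemainder_one : expansionRemainder 1 = 0 := by
  simp [expansionRemainder]

theorem continuousOn_expansionRemainder : ContinuousOn expansionRemainder (Ioi 0) := by
  unfold expansionRemainder
  fun_prop (disch := first | exact fun x hx => (mem_Ioi.1 hx).ne' | norm_num)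

theorem hasDerivAt_expansionRemainder {t : ℝ} (ht : 1 < t) :
    HasDerivAt expansionRemainder (√(t - 1) * (√(t + 1) / t - √2)) t := by
  refine ((hasDerivAt_sqrt_sq_sub_one_sub_arccos_one_div ht).sub
    ((hasDerivAt_sub_one_rpow_three_halves t).const_mul (2 * √2 / 3))).congr_deriv ?_
  rw [show t ^ 2 - 1 = (t - 1) * (t + 1) by ring, sqrt_mul (by linarith)]
  ring

theorem abs_expansionRemainder_le {z : ℝ} (hz : 1 < z) :
    |expansionRemainder z| ≤ 3 / 2 * (z - 1) ^ ((5 : ℝ) / 2) := by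
  obtain ⟨c, ⟨hc1, hcz⟩, hc⟩ := exists_hasDerivAt_eq_slope expansionRemainder _ hz
    (continuousOn_expansionRemainder.mono fun _ hx => zero_lt_one.trans_le hx.1)
    fun c hc => hasDerivAt_expansionRemainder hc.1
  rw [expansionRemainder_one, sub_zero, eq_div_iff (by linarith)] at hc
  have hpow : (z - 1) ^ ((5 : ℝ) / 2) = √(z - 1) * (z - 1) * (z - 1) := by
    rw [show (5 : ℝ) / 2 = 1 / 2 + 1 + 1 by norm_num, rpow_add_one (by linarith),
      rpow_add_one (by linarith), ← sqrt_eq_rpow]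
  calc |expansionRemainder z| = √(c - 1) * |√(c + 1) / c - √2| * (z - 1) := by
        rw [← hc, abs_mul, abs_mul, abs_of_nonneg (sqrt_nonneg _), abs_of_pos (sub_pos.2 hz)]
    _ ≤ √(z - 1) * (3 / 2 * (z - 1)) * (z - 1) := by
        gcongr ?_ * ?_ * _
        · exact sqrt_le_sqrt (by linarith)
        · exact (abs_sqrt_add_one_div_sub_sqrt_two_le hc1.le).trans (by gcongr)
    _ = 3 / 2 * (z - 1) ^ ((5 : ℝ) / 2) := by rw [hpow]; ring

theorem asymptotic_near_one :
    ∃ C > (0:ℝ), ∃ δ > (0:ℝ), ∀ z : ℝ, 1 < z → z < 1 + δ →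
      |Real.sqrt (z^2 - 1) - Real.arccos (1/z)
        - (2 * Real.sqrt 2 / 3) * (z - 1) ^ ((3:ℝ)/2)|
        ≤ C * (z - 1) ^ ((5:ℝ)/2) :=
  ⟨3 / 2, by norm_num, 1, one_pos, fun _ hz _ => abs_expansionRemainder_le hz⟩
end

section
/- There exist constants c₁, c₂ > 0 and δ > 0 such that for all ν > 0 and all x with ν < x < (1+δ)ν, one has c₁ * ν^{-1/2} * (x-ν)^{3/2} ≤ x * g(ν/x) ≤ c₂ * ν^{-1/2} * (x-ν)^{3/2}, where g(t) = (sqrt(1-t^2) - t*arccos(t))/π. -/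
/-!
Substituting `t = cos θ` turns `π g(t)` into `sin θ - θ cos θ`, which is of order `θ³` for small
`θ`, while `1 - t = 1 - cos θ` is of order `θ²`; hence `π g(t) ≍ (1 - t)^{3/2}`. With `t = ν / x`
we have `x (1 - t)^{3/2} = (x - ν)^{3/2} x^{-1/2}`, and `x^{-1/2} ≍ ν^{-1/2}` once `x ≤ (1 + δ) ν`.
-/

open Real

namespace Real

lemma sin_sub_mul_cos_le {θ : ℝ} (hθ : 0 ≤ θ) : sin θ - θ * cos θ ≤ θ ^ 3 / 2 := by
  nlinarith [sin_le hθ, one_sub_sq_div_two_le_cos (x := θ)]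

lemma pow_three_div_five_le_sin_sub_mul_cos {θ : ℝ} (h0 : 0 ≤ θ) (h1 : θ ≤ 1) :
    θ ^ 3 / 5 ≤ sin θ - θ * cos θ := by
  have hθ : |θ| ≤ 1 := abs_le.2 ⟨by linarith, h1⟩
  have hcos := (abs_le.1 (cos_bound hθ)).2
  rw [abs_of_nonneg h0] at hcos
  -- the Taylor bounds leave `θ³/3 - 5θ⁵/96 ≥ θ³/5`
  nlinarith [sin_ge_sub_cube h0, pow_le_one₀ h0 h1 (n := 2), pow_nonneg h0 3]

lemma sq_div_four_le_one_sub_cos {θ : ℝ} (hθ : |θ| ≤ 1) : θ ^ 2 / 4 ≤ 1 - cos θ := by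
  have hcos := (abs_le.1 (cos_bound hθ)).2
  have hθ2 : θ ^ 2 ≤ 1 := by rw [← sq_abs]; exact pow_le_one₀ (abs_nonneg θ) hθ
  have hθ4 : |θ| ^ 4 = θ ^ 2 * θ ^ 2 := by rw [← sq_abs θ]; ring
  nlinarith [sq_nonneg θ]

lemma sqrt_one_sub_sq_sub_mul_arccos_bounds {t : ℝ} (h0 : cos 1 ≤ t) (h1 : t ≤ 1) :
    √(1 - t) ^ 3 / 5 ≤ √(1 - t ^ 2) - t * arccos t ∧
      √(1 - t ^ 2) - t * arccos t ≤ 4 * √(1 - t) ^ 3 := by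
  set θ := arccos t
  have hθ0 : 0 ≤ θ := arccos_nonneg t
  have hθ1 : θ ≤ 1 := by
    simpa [arccos_cos zero_le_one (by linarith [pi_gt_three])] using arccos_le_arccos h0
  have hcos : cos θ = t := cos_arccos (by linarith [cos_one_pos]) h1
  have hE : √(1 - t ^ 2) - t * θ = sin θ - θ * cos θ := by rw [sin_arccos, hcos]; ring
  have hsθ : √(1 - t) ≤ θ := by
    rw [sqrt_le_left hθ0, ← hcos]
    nlinarith [one_sub_sq_div_two_le_cos (x := θ)]
  have hθs : θ ≤ 2 * √(1 - t) := by
    rw [← div_le_iff₀' two_pos, le_sqrt (by positivity) (by linarith), ← hcos]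
    linarith [sq_div_four_le_one_sub_cos (abs_le.2 ⟨by linarith, hθ1⟩)]
  rw [hE]
  constructor
  · calc √(1 - t) ^ 3 / 5 ≤ θ ^ 3 / 5 := by gcongr
      _ ≤ _ := pow_three_div_five_le_sin_sub_mul_cos hθ0 hθ1
  · calc sin θ - θ * cos θ ≤ θ ^ 3 / 2 := sin_sub_mul_cos_le hθ0
      _ ≤ (2 * √(1 - t)) ^ 3 / 2 := by gcongr
      _ = 4 * √(1 - t) ^ 3 := by ring

end Real

lemma mul_sqrt_one_sub_div_pow_three (ν : ℝ) {x : ℝ} (hx : 0 < x) :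
    x * √(1 - ν / x) ^ 3 = √(x - ν) ^ 3 / √x := by
  have hsx : 0 < √x := sqrt_pos.2 hx
  rw [show 1 - ν / x = (x - ν) / x by field_simp, sqrt_div' _ hx.le, div_pow,
    ← sq_sqrt hx.le]
  field_simp
  rw [sqrt_sq hsx.le]
  ring

lemma mul_sqrt_one_sub_sq_sub_mul_arccos_div_bounds {ν x : ℝ} (hν : 0 < ν) (hνx : ν ≤ x)
    (hx : 5 * x ≤ 9 * ν) :
    √(x - ν) ^ 3 / (10 * √ν) ≤ x * (√(1 - (ν / x) ^ 2) - ν / x * arccos (ν / x)) ∧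
      x * (√(1 - (ν / x) ^ 2) - ν / x * arccos (ν / x)) ≤ 4 * √(x - ν) ^ 3 / √ν := by
  have hx0 : 0 < x := hν.trans_le hνx
  have ht0 : cos 1 ≤ ν / x := cos_one_le.trans (by rw [le_div_iff₀ hx0]; linarith)
  obtain ⟨hlow, hup⟩ := sqrt_one_sub_sq_sub_mul_arccos_bounds ht0 ((div_le_one hx0).2 hνx)
  have hscale := mul_sqrt_one_sub_div_pow_three ν hx0
  have hsqrt_le : √ν ≤ √x := sqrt_le_sqrt hνx
  have hsqrt_le_two : √x ≤ 2 * √ν := by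
    rw [sqrt_le_left (by positivity), mul_pow, sq_sqrt hν.le]; linarith
  constructor
  · calc √(x - ν) ^ 3 / (10 * √ν) ≤ √(x - ν) ^ 3 / √x / 5 := by
          rw [div_div]
          exact div_le_div_of_nonneg_left (by positivity) (by positivity) (by linarith)
      _ = x * (√(1 - ν / x) ^ 3 / 5) := by rw [← hscale]; ring
      _ ≤ _ := by gcongr
  · calc x * (√(1 - (ν / x) ^ 2) - ν / x * arccos (ν / x))
        ≤ x * (4 * √(1 - ν / x) ^ 3) := by gcongr
      _ = 4 * (√(x - ν) ^ 3 / √x) := by rw [← hscale]; ring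
      _ ≤ 4 * √(x - ν) ^ 3 / √ν := by rw [mul_div_assoc]; gcongr

theorem xg_two_sided_estimate :
    ∃ c₁ > (0:ℝ), ∃ c₂ > (0:ℝ), ∃ δ > (0:ℝ), ∀ ν : ℝ, 0 < ν → ∀ x : ℝ,
      ν < x → x < (1 + δ) * ν →
      c₁ * ν ^ (-(1:ℝ)/2) * (x - ν) ^ ((3:ℝ)/2)
          ≤ x * ((Real.sqrt (1 - (ν/x)^2) - (ν/x) * Real.arccos (ν/x)) / π) ∧
      x * ((Real.sqrt (1 - (ν/x)^2) - (ν/x) * Real.arccos (ν/x)) / π)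
          ≤ c₂ * ν ^ (-(1:ℝ)/2) * (x - ν) ^ ((3:ℝ)/2) := by
  refine ⟨1 / (10 * π), by positivity, 4 / π, by positivity, 4 / 5, by norm_num, ?_⟩
  intro ν hν x hνx hx
  obtain ⟨hlow, hup⟩ := mul_sqrt_one_sub_sq_sub_mul_arccos_div_bounds hν hνx.le (by linarith)
  have hpow : ν ^ (-(1:ℝ)/2) * (x - ν) ^ ((3:ℝ)/2) = √(x - ν) ^ 3 / √ν := by
    rw [rpow_div_two_eq_sqrt _ hν.le, rpow_div_two_eq_sqrt _ (by linarith), rpow_neg_one]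
    norm_cast
    ring
  rw [mul_assoc, mul_assoc, hpow, ← mul_div_assoc x]
  constructor
  · calc 1 / (10 * π) * (√(x - ν) ^ 3 / √ν) = √(x - ν) ^ 3 / (10 * √ν) / π := by ring
      _ ≤ _ := by gcongr
  · calc _ ≤ 4 * √(x - ν) ^ 3 / √ν / π := by gcongr
      _ = _ := by ring
end
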